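/- Let (Ȳ,Z̄,V) be random variables over finite alphabets with joint pmf p'(ȳ,v)·∏_{m=1}^{M'} q'_m(z_m|y_m), and let B* be the set of vectors R' ∈ ℝ^{M'} with I(Ȳ_I;Z̄_I|Z̄_{I^c},V) ≤ Σ_{i∈I} R'_i for every nonempty I ⊆ {1,…,M'}. Define R' by R'_i = I(Y_i;Z_i|Z̄_{{1,…,i−1}},V) for i = 1,…,M'. Then R' ∈ B*, and for every m ∈ {0,1,…,M'−1} the constraint indexed by the set {m+1,…,M'} holds with equality: I(Ȳ_{{m+1,…,M'}};Z̄_{{m+1,…,M'}}|Z̄_{{1,…,m}},V) = Σ_{i=m+1}^{M'} R'_i. -/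

import Mathlib

/-!
Write `E(W, S) = H(Ȳ_W, Z̄_S, V)`. Since `Z_i` depends on everything else only through `Y_i`,
adding `i ∈ W` to `S` raises `E(W, S)` by exactly `H(Z_i | Y_i)`, whereas adding `i` to `S`
raises `E(∅, S)` by `H(Z_i | Z̄_S, V)`, which by submodularity of entropy only decreases as `S`
grows. Telescoping both along the chain `Iᶜ ⊆ Iᶜ ∪ {j ∈ I | j < i} ⊆ univ` turns the constraint
of `I` into `∑_{i ∈ I} (H(Z_i | Z̄_{Iᶜ ∪ {j ∈ I | j < i}}, V) - H(Z_i | Y_i))`, while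
`R'_i = H(Z_i | Z̄_{j < i}, V) - H(Z_i | Y_i)`. The conditioning set of the first contains
`{j | j < i}`, so each term is at most `R'_i`; for a tail set `I = {m+1, …, M'}` the two sets
coincide, giving equality.
-/

open Finset
open scoped Classical

noncomputable section

/-- The distribution (pmf) of the random variable `X` under the pmf `P` on the finite
sample space `Ω`. -/
def dist {Ω α : Type*} [Fintype Ω] [Fintype α] (P : Ω → ℝ) (X : Ω → α) (a : α) : ℝ :=
  ∑ ω, if X ω = a then P ω else 0

/-- Shannon entropy (base 2) of the random variable `X` under the pmf `P`. -/
def Hent {Ω α : Type*} [Fintype Ω] [Fintype α] (P : Ω → ℝ) (X : Ω → α) : ℝ :=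
  -∑ a, dist P X a * Real.logb 2 (dist P X a)

/-- Conditional entropy `H(X | Y)`. -/
def condEnt {Ω α β : Type*} [Fintype Ω] [Fintype α] [Fintype β]
    (P : Ω → ℝ) (X : Ω → α) (Y : Ω → β) : ℝ :=
  Hent P (fun ω => (X ω, Y ω)) - Hent P Y

/-- Conditional mutual information `I(X ; Y | Z)`. -/
def condMI {Ω α β γ : Type*} [Fintype Ω] [Fintype α] [Fintype β] [Fintype γ]
    (P : Ω → ℝ) (X : Ω → α) (Y : Ω → β) (Z : Ω → γ) : ℝ :=
  Hent P (fun ω => (X ω, Z ω)) + Hent P (fun ω => (Y ω, Z ω))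
    - Hent P (fun ω => (X ω, Y ω, Z ω)) - Hent P Z

/-- The ε-strongly typical set condition for a sequence `xs` with respect to pmf `p`:
`|N(a|xs)/n − p(a)| < ε/|α|` for every letter `a`. -/
def StronglyTypical {α : Type*} [Fintype α] (p : α → ℝ) {n : ℕ} (xs : Fin n → α)
    (ε : ℝ) : Prop :=
  ∀ a : α, |((Finset.univ.filter fun k => xs k = a).card : ℝ) / n - p a|
    < ε / Fintype.card α

section YZV

variable {M' : ℕ}

/-- Canonical sample space for `(Ȳ, Z̄, V)`. -/
abbrev Samp (𝒴 𝒵 : Fin M' → Type*) (V : Type*) : Type _ :=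
  (∀ i, 𝒴 i) × (∀ i, 𝒵 i) × V

variable {𝒴 𝒵 : Fin M' → Type*} [∀ i, Fintype (𝒴 i)] [∀ i, Fintype (𝒵 i)]
  {V : Type*} [Fintype V]

/-- The joint pmf `p'(ȳ,v) · ∏ₘ q'ₘ(zₘ | yₘ)` on the canonical sample space: conditionally
on `(Ȳ,V)` the `Zₘ` are mutually independent and `Zₘ` depends only on `Yₘ`. -/
def Pjoint (p' : (∀ i, 𝒴 i) × V → ℝ) (q : ∀ m, 𝒴 m → 𝒵 m → ℝ) :
    Samp 𝒴 𝒵 V → ℝ :=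
  fun ω => p' (ω.1, ω.2.2) * ∏ m, q m (ω.1 m) (ω.2.1 m)

/-- `Ȳ_I`. -/
def Ybar (I : Finset (Fin M')) : Samp 𝒴 𝒵 V → (∀ i : I, 𝒴 i.1) := fun ω i => ω.1 i.1

/-- `Z̄_I`. -/
def Zbar (I : Finset (Fin M')) : Samp 𝒴 𝒵 V → (∀ i : I, 𝒵 i.1) := fun ω i => ω.2.1 i.1

/-- The pair `(Z̄_I, V)` used as a conditioning variable. -/
def ZbarV (I : Finset (Fin M')) : Samp 𝒴 𝒵 V → (∀ i : I, 𝒵 i.1) × V :=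
  fun ω => (fun i => ω.2.1 i.1, ω.2.2)

/-- Membership in the region `B*`: `I(Ȳ_I; Z̄_I | Z̄_{Iᶜ}, V) ≤ Σ_{i∈I} R_i` for every
nonempty `I ⊆ {1,…,M'}`. -/
def memBstar (p' : (∀ i, 𝒴 i) × V → ℝ) (q : ∀ m, 𝒴 m → 𝒵 m → ℝ)
    (R : Fin M' → ℝ) : Prop :=
  ∀ I : Finset (Fin M'), I.Nonempty →
    condMI (Pjoint p' q) (Ybar I) (Zbar I) (ZbarV Iᶜ) ≤ ∑ i ∈ I, R i

end YZV

section Entropy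

variable {Ω α β γ : Type*} [Fintype Ω] [Fintype α] [Fintype β] [Fintype γ] (P : Ω → ℝ)

theorem sum_dist_mul (X : Ω → α) (f : α → ℝ) :
    ∑ a, dist P X a * f a = ∑ ω, P ω * f (X ω) := by
  simp only [_root_.dist, Finset.sum_mul, ite_mul, zero_mul]
  rw [Finset.sum_comm]
  simp

theorem dist_nonneg_of_nonneg (hP : ∀ ω, 0 ≤ P ω) (X : Ω → α) (a : α) :
    0 ≤ dist P X a :=
  Finset.sum_nonneg fun ω _ => by split_ifs <;> simp [hP ω]

theorem dist_apply_pos (hP : ∀ ω, 0 ≤ P ω) (X : Ω → α) {ω : Ω} (hω : 0 < P ω) :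
    0 < dist P X (X ω) :=
  hω.trans_le <| by
    simpa [_root_.dist] using Finset.single_le_sum (f := fun ω' => if X ω' = X ω then P ω' else 0)
      (fun ω' _ => by split_ifs <;> simp [hP ω']) (Finset.mem_univ ω)

theorem sum_dist_prodMk_left (X : Ω → α) (Z : Ω → β) (z : β) :
    ∑ x, dist P (fun ω => (X ω, Z ω)) (x, z) = dist P Z z := by
  simp only [_root_.dist]
  rw [Finset.sum_comm]
  refine Finset.sum_congr rfl fun ω _ => ?_
  by_cases h : Z ω = z <;> simp [Prod.ext_iff, h]

theorem Hent_eq_neg_sum (X : Ω → α) :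
    Hent P X = -∑ ω, P ω * Real.logb 2 (dist P X (X ω)) := by
  rw [Hent, sum_dist_mul]

theorem Hent_congr {X : Ω → α} {X' : Ω → β} (h : ∀ ω ω', X ω = X ω' ↔ X' ω = X' ω') :
    Hent P X = Hent P X' := by
  have hdist : ∀ ω, dist P X (X ω) = dist P X' (X' ω) := fun ω =>
    Finset.sum_congr rfl fun ω' _ => if_congr (h ω' ω) rfl rfl
  simp only [Hent_eq_neg_sum, hdist]

theorem sum_mul_log_nonpos {g : Ω → ℝ} (hP : ∀ ω, 0 ≤ P ω) (hg : ∀ ω, 0 < P ω → 0 < g ω)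
    (hsum : ∑ ω, P ω * g ω ≤ ∑ ω, P ω) : ∑ ω, P ω * Real.log (g ω) ≤ 0 := by
  have hpt : ∀ ω, P ω * Real.log (g ω) ≤ P ω * g ω - P ω := fun ω => by
    rcases (hP ω).eq_or_lt with h | h
    · simp [← h]
    · have := mul_le_mul_of_nonneg_left (Real.log_le_sub_one_of_pos (hg ω h)) h.le
      linarith
  calc ∑ ω, P ω * Real.log (g ω) ≤ ∑ ω, (P ω * g ω - P ω) := Finset.sum_le_sum fun ω _ => hpt ω
    _ ≤ 0 := by rw [Finset.sum_sub_distrib]; linarith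

/-- `p(x,z) p(y,z) / (p(x,y,z) p(z))`: `I(X;Y|Z)` is the expectation of minus its logarithm. -/
def miRatio (X : Ω → α) (Y : Ω → β) (Z : Ω → γ) (a : α × β × γ) : ℝ :=
  dist P (fun ω => (X ω, Z ω)) (a.1, a.2.2) * dist P (fun ω => (Y ω, Z ω)) (a.2.1, a.2.2) /
    (dist P (fun ω => (X ω, Y ω, Z ω)) a * dist P Z a.2.2)

variable {P}

theorem miRatio_apply_pos (hP : ∀ ω, 0 ≤ P ω) (X : Ω → α) (Y : Ω → β) (Z : Ω → γ)
    {ω : Ω} (hω : 0 < P ω) : 0 < miRatio P X Y Z (X ω, Y ω, Z ω) :=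
  div_pos (mul_pos (dist_apply_pos P hP _ hω) (dist_apply_pos P hP _ hω))
    (mul_pos (dist_apply_pos P hP _ hω) (dist_apply_pos P hP _ hω))

theorem logb_miRatio_apply (hP : ∀ ω, 0 ≤ P ω) (X : Ω → α) (Y : Ω → β) (Z : Ω → γ)
    {ω : Ω} (hω : 0 < P ω) :
    Real.logb 2 (miRatio P X Y Z (X ω, Y ω, Z ω)) =
      Real.logb 2 (dist P (fun ω => (X ω, Z ω)) (X ω, Z ω))
        + Real.logb 2 (dist P (fun ω => (Y ω, Z ω)) (Y ω, Z ω))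
        - Real.logb 2 (dist P (fun ω => (X ω, Y ω, Z ω)) (X ω, Y ω, Z ω))
        - Real.logb 2 (dist P Z (Z ω)) := by
  have hXZ : 0 < dist P (fun ω => (X ω, Z ω)) (X ω, Z ω) := dist_apply_pos P hP _ hω
  have hYZ : 0 < dist P (fun ω => (Y ω, Z ω)) (Y ω, Z ω) := dist_apply_pos P hP _ hω
  have hXYZ : 0 < dist P (fun ω => (X ω, Y ω, Z ω)) (X ω, Y ω, Z ω) :=
    dist_apply_pos P hP _ hω
  have hZ : 0 < dist P Z (Z ω) := dist_apply_pos P hP _ hω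
  rw [miRatio, Real.logb_div (by positivity) (by positivity), Real.logb_mul hXZ.ne' hYZ.ne',
    Real.logb_mul hXYZ.ne' hZ.ne']
  ring

theorem condMI_eq_neg_sum_logb_miRatio (hP : ∀ ω, 0 ≤ P ω) (X : Ω → α) (Y : Ω → β)
    (Z : Ω → γ) :
    condMI P X Y Z = -∑ ω, P ω * Real.logb 2 (miRatio P X Y Z (X ω, Y ω, Z ω)) := by
  have hpt : ∀ ω, P ω * Real.logb 2 (miRatio P X Y Z (X ω, Y ω, Z ω)) =
      P ω * Real.logb 2 (dist P (fun ω => (X ω, Z ω)) (X ω, Z ω))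
        + P ω * Real.logb 2 (dist P (fun ω => (Y ω, Z ω)) (Y ω, Z ω))
        - P ω * Real.logb 2 (dist P (fun ω => (X ω, Y ω, Z ω)) (X ω, Y ω, Z ω))
        - P ω * Real.logb 2 (dist P Z (Z ω)) := fun ω => by
    rcases (hP ω).eq_or_lt with h | h
    · simp [← h]
    · rw [logb_miRatio_apply hP X Y Z h]
      ring
  simp only [condMI, Hent_eq_neg_sum, hpt, Finset.sum_add_distrib, Finset.sum_sub_distrib]
  ring

theorem sum_mul_miRatio_le (hP : ∀ ω, 0 ≤ P ω) (X : Ω → α) (Y : Ω → β) (Z : Ω → γ) :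
    ∑ ω, P ω * miRatio P X Y Z (X ω, Y ω, Z ω) ≤ ∑ ω, P ω := by
  calc ∑ ω, P ω * miRatio P X Y Z (X ω, Y ω, Z ω)
      = ∑ a, dist P (fun ω => (X ω, Y ω, Z ω)) a * miRatio P X Y Z a := (sum_dist_mul P _ _).symm
    _ ≤ ∑ a : α × β × γ, dist P (fun ω => (X ω, Z ω)) (a.1, a.2.2) *
          dist P (fun ω => (Y ω, Z ω)) (a.2.1, a.2.2) / dist P Z a.2.2 := by
      refine Finset.sum_le_sum fun a _ => ?_
      rcases (dist_nonneg_of_nonneg P hP (fun ω => (X ω, Y ω, Z ω)) a).eq_or_lt with h | h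
      · rw [← h, zero_mul]
        exact div_nonneg (mul_nonneg (dist_nonneg_of_nonneg P hP _ _)
          (dist_nonneg_of_nonneg P hP _ _)) (dist_nonneg_of_nonneg P hP _ _)
      · rw [miRatio, mul_div_assoc', mul_div_mul_left _ _ h.ne']
    _ = ∑ z, (∑ x, dist P (fun ω => (X ω, Z ω)) (x, z)) *
          (∑ y, dist P (fun ω => (Y ω, Z ω)) (y, z)) / dist P Z z := by
      simp only [Fintype.sum_prod_type_right, Finset.sum_mul_sum, Finset.sum_div]
      exact Finset.sum_congr rfl fun z _ => Finset.sum_comm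
    _ = ∑ ω, P ω := by
      simp only [sum_dist_prodMk_left, mul_self_div_self]
      simpa using sum_dist_mul P Z fun _ => 1

theorem condMI_nonneg (hP : ∀ ω, 0 ≤ P ω) (X : Ω → α) (Y : Ω → β) (Z : Ω → γ) :
    0 ≤ condMI P X Y Z := by
  have hlog : ∑ ω, P ω * Real.log (miRatio P X Y Z (X ω, Y ω, Z ω)) ≤ 0 :=
    sum_mul_log_nonpos P hP (fun _ => miRatio_apply_pos hP X Y Z)
      (sum_mul_miRatio_le hP X Y Z)
  rw [condMI_eq_neg_sum_logb_miRatio hP, neg_nonneg]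
  simp only [Real.logb, mul_div_assoc', ← Finset.sum_div]
  exact div_nonpos_of_nonpos_of_nonneg hlog (Real.log_nonneg one_le_two)

end Entropy

theorem sum_pi_ite_forall_eq_prod {ι : Type*} [Fintype ι] [DecidableEq ι] {κ : ι → Type*}
    [∀ i, Fintype (κ i)] (G : ∀ i, κ i → ℝ) (hG : ∀ i, ∑ k, G i k = 1)
    (S : Finset ι) (z : ∀ i, κ i) :
    ∑ z' : ∀ i, κ i, (if ∀ j ∈ S, z' j = z j then ∏ i, G i (z' i) else 0) =
      ∏ i ∈ S, G i (z i) := by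
  set t : ∀ i, Finset (κ i) := fun i => if i ∈ S then {z i} else Finset.univ
  have ht : Finset.univ.filter (fun z' : ∀ i, κ i => ∀ j ∈ S, z' j = z j) = Fintype.piFinset t := by
    ext z'
    simp only [Finset.mem_filter, Finset.mem_univ, true_and, Fintype.mem_piFinset, t]
    refine forall_congr' fun j => ?_
    split_ifs <;> simp [*]
  calc ∑ z' : ∀ i, κ i, (if ∀ j ∈ S, z' j = z j then ∏ i, G i (z' i) else 0)
      = ∏ i, ∑ k ∈ t i, G i k := by rw [← Finset.sum_filter, ht, Finset.prod_univ_sum]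
    _ = ∏ i, if i ∈ S then G i (z i) else 1 :=
      Finset.prod_congr rfl fun i _ => by simp only [t]; split_ifs <;> simp [hG]
    _ = ∏ i ∈ S, G i (z i) := by rw [Finset.prod_ite_mem, Finset.univ_inter]

section Telescope

variable {n : ℕ}

/-- `Iᶜ ∪ {j ∈ I | j < k}`, the chain from `Iᶜ` to `univ` along which entropies are telescoped. -/
def outsideOrBelow (I : Finset (Fin n)) (k : ℕ) : Finset (Fin n) :=
  Finset.univ.filter fun j => j ∉ I ∨ (j : ℕ) < k

theorem outsideOrBelow_succ (I : Finset (Fin n)) (i : Fin n) :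
    outsideOrBelow I (i + 1) =
      if i ∈ I then insert i (outsideOrBelow I i) else outsideOrBelow I i := by
  ext j
  by_cases hj : j = i <;> split_ifs <;>
    simp_all [outsideOrBelow, le_iff_lt_or_eq, Fin.val_eq_val]

theorem sub_eq_sum_outsideOrBelow (G : Finset (Fin n) → ℝ) (I : Finset (Fin n)) :
    G Finset.univ - G Iᶜ =
      ∑ i ∈ I, (G (insert i (outsideOrBelow I i)) - G (outsideOrBelow I i)) := by
  have h₀ : outsideOrBelow I 0 = Iᶜ := by ext; simp [outsideOrBelow]
  have hn : outsideOrBelow I n = Finset.univ := by ext j; simp [outsideOrBelow]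
  calc G Finset.univ - G Iᶜ = G (outsideOrBelow I n) - G (outsideOrBelow I 0) := by rw [h₀, hn]
    _ = ∑ i : Fin n, (G (outsideOrBelow I (i + 1)) - G (outsideOrBelow I i)) :=
      ((Fin.sum_univ_eq_sum_range
        (fun k => G (outsideOrBelow I (k + 1)) - G (outsideOrBelow I k)) n).trans
          (Finset.sum_range_sub (fun k => G (outsideOrBelow I k)) n)).symm
    _ = ∑ i, if i ∈ I then G (insert i (outsideOrBelow I i)) - G (outsideOrBelow I i) else 0 :=
      Finset.sum_congr rfl fun i _ => by rw [outsideOrBelow_succ]; split_ifs <;> simp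
    _ = _ := by rw [Finset.sum_ite_mem, Finset.univ_inter]

theorem filter_lt_subset_outsideOrBelow (I : Finset (Fin n)) (i : Fin n) :
    Finset.univ.filter (· < i) ⊆ outsideOrBelow I i := fun j hj => by
  simp only [outsideOrBelow, Finset.mem_filter, Finset.mem_univ, true_and] at hj ⊢
  exact Or.inr hj

theorem outsideOrBelow_filter_le {m : ℕ} {i : Fin n} (hi : m ≤ i) :
    outsideOrBelow (Finset.univ.filter fun j : Fin n => m ≤ (j : ℕ)) i =
      Finset.univ.filter (· < i) := by
  ext j
  simp only [outsideOrBelow, Finset.mem_filter, Finset.mem_univ, true_and, Fin.lt_def]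
  omega

end Telescope

section SampleSpace

variable {M' : ℕ} {𝒴 𝒵 : Fin M' → Type*} {V : Type*}

@[simp]
theorem Ybar_eq_iff {S : Finset (Fin M')} {ω ω' : Samp 𝒴 𝒵 V} :
    Ybar S ω = Ybar S ω' ↔ ∀ j ∈ S, ω.1 j = ω'.1 j := by
  simp [Ybar, funext_iff]

@[simp]
theorem Zbar_eq_iff {S : Finset (Fin M')} {ω ω' : Samp 𝒴 𝒵 V} :
    Zbar S ω = Zbar S ω' ↔ ∀ j ∈ S, ω.2.1 j = ω'.2.1 j := by
  simp [Zbar, funext_iff]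

@[simp]
theorem ZbarV_eq_iff {S : Finset (Fin M')} {ω ω' : Samp 𝒴 𝒵 V} :
    ZbarV S ω = ZbarV S ω' ↔ (∀ j ∈ S, ω.2.1 j = ω'.2.1 j) ∧ ω.2.2 = ω'.2.2 := by
  simp [ZbarV, Prod.ext_iff, funext_iff]

theorem Pjoint_nonneg (p' : (∀ i, 𝒴 i) × V → ℝ) (q : ∀ m, 𝒴 m → 𝒵 m → ℝ)
    (hp'0 : ∀ yv, 0 ≤ p' yv) (hq0 : ∀ m y z, 0 ≤ q m y z) (ω : Samp 𝒴 𝒵 V) :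
    0 ≤ Pjoint p' q ω :=
  mul_nonneg (hp'0 _) (Finset.prod_nonneg fun _ _ => hq0 _ _ _)

variable [∀ i, Fintype (𝒴 i)] [∀ i, Fintype (𝒵 i)] [Fintype V]

/-- `H(Ȳ_W, Z̄_S, V)`. -/
def entYZV (P : Samp 𝒴 𝒵 V → ℝ) (W S : Finset (Fin M')) : ℝ :=
  Hent P fun ω => (Ybar W ω, ZbarV S ω)

theorem Hent_eq_entYZV {α : Type*} [Fintype α] (P : Samp 𝒴 𝒵 V → ℝ)
    {X : Samp 𝒴 𝒵 V → α} (W S : Finset (Fin M'))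
    (h : ∀ ω ω', X ω = X ω' ↔ (∀ j ∈ W, ω.1 j = ω'.1 j) ∧
      (∀ j ∈ S, ω.2.1 j = ω'.2.1 j) ∧ ω.2.2 = ω'.2.2) :
    Hent P X = entYZV P W S :=
  Hent_congr P fun ω ω' => by simp [h]

theorem entYZV_insert_sub_le {P : Samp 𝒴 𝒵 V → ℝ} (hP : ∀ ω, 0 ≤ P ω) (i : Fin M')
    {S' S : Finset (Fin M')} (hS : S' ⊆ S) :
    entYZV P ∅ (insert i S) - entYZV P ∅ S ≤ entYZV P ∅ (insert i S') - entYZV P ∅ S' := by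
  obtain ⟨A, rfl⟩ : ∃ A, S = A ∪ S' := ⟨S, (Finset.union_eq_left.mpr hS).symm⟩
  have h := condMI_nonneg hP (fun ω => ω.2.1 i) (Zbar A) (ZbarV S')
  have e₁ : Hent P (fun ω => (ω.2.1 i, ZbarV S' ω)) = entYZV P ∅ (insert i S') :=
    Hent_eq_entYZV P _ _ fun ω ω' => by simp [and_assoc]
  have e₂ : Hent P (fun ω => (Zbar A ω, ZbarV S' ω)) = entYZV P ∅ (A ∪ S') :=
    Hent_eq_entYZV P _ _ fun ω ω' => by simp [or_imp, forall_and, and_assoc]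
  have e₃ : Hent P (fun ω => (ω.2.1 i, Zbar A ω, ZbarV S' ω)) = entYZV P ∅ (insert i (A ∪ S')) :=
    Hent_eq_entYZV P _ _ fun ω ω' => by simp [or_imp, forall_and, and_assoc]
  have e₄ : Hent P (ZbarV S') = entYZV P ∅ S' := Hent_eq_entYZV P _ _ fun ω ω' => by simp
  simp only [condMI, e₁, e₂, e₃, e₄] at h
  linarith

variable (p' : (∀ i, 𝒴 i) × V → ℝ) (q : ∀ m, 𝒴 m → 𝒵 m → ℝ)

theorem dist_Pjoint_Ybar_ZbarV (hq1 : ∀ m y, ∑ z, q m y z = 1) (W S : Finset (Fin M'))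
    (ω : Samp 𝒴 𝒵 V) :
    dist (Pjoint p' q) (fun ω' => (Ybar W ω', ZbarV S ω')) (Ybar W ω, ZbarV S ω) =
      ∑ y, if ∀ j ∈ W, y j = ω.1 j then p' (y, ω.2.2) * ∏ m ∈ S, q m (y m) (ω.2.1 m) else 0 := by
  simp only [_root_.dist, Fintype.sum_prod_type, Prod.mk.injEq, Ybar_eq_iff, ZbarV_eq_iff,
    Pjoint]
  refine Finset.sum_congr rfl fun y _ => ?_
  by_cases hW : ∀ j ∈ W, y j = ω.1 j
  · simp only [eq_true hW, true_and, if_true]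
    simp only [and_comm (b := _ = ω.2.2), ite_and, Finset.sum_ite_eq', Finset.mem_univ, if_true]
    rw [← sum_pi_ite_forall_eq_prod (fun m => q m (y m)) (fun m => hq1 m (y m)), Finset.mul_sum]
    exact Finset.sum_congr rfl fun z _ => by split_ifs <;> simp
  · simp [hW]

theorem dist_Pjoint_insert (hq1 : ∀ m y, ∑ z, q m y z = 1) {W S : Finset (Fin M')}
    {i : Fin M'} (hiW : i ∈ W) (hiS : i ∉ S) (ω : Samp 𝒴 𝒵 V) :
    dist (Pjoint p' q) (fun ω' => (Ybar W ω', ZbarV (insert i S) ω'))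
        (Ybar W ω, ZbarV (insert i S) ω) =
      q i (ω.1 i) (ω.2.1 i) *
        dist (Pjoint p' q) (fun ω' => (Ybar W ω', ZbarV S ω')) (Ybar W ω, ZbarV S ω) := by
  rw [dist_Pjoint_Ybar_ZbarV p' q hq1, dist_Pjoint_Ybar_ZbarV p' q hq1, Finset.mul_sum]
  refine Finset.sum_congr rfl fun y _ => ?_
  split_ifs with hW
  · rw [Finset.prod_insert hiS, hW i hiW]
    ring
  · simp

/-- `H(Z_i | Y_i)` under `Pjoint p' q`. -/
def condEntZY (i : Fin M') : ℝ :=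
  -∑ ω : Samp 𝒴 𝒵 V, Pjoint p' q ω * Real.logb 2 (q i (ω.1 i) (ω.2.1 i))

theorem entYZV_insert_sub_of_mem (hp'0 : ∀ yv, 0 ≤ p' yv) (hq0 : ∀ m y z, 0 ≤ q m y z)
    (hq1 : ∀ m y, ∑ z, q m y z = 1) {W S : Finset (Fin M')} {i : Fin M'} (hiW : i ∈ W)
    (hiS : i ∉ S) :
    entYZV (Pjoint p' q) W (insert i S) - entYZV (Pjoint p' q) W S = condEntZY p' q i := by
  have hP := Pjoint_nonneg p' q hp'0 hq0
  have hpt : ∀ ω : Samp 𝒴 𝒵 V,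
      Pjoint p' q ω * Real.logb 2 (dist (Pjoint p' q)
          (fun ω' => (Ybar W ω', ZbarV (insert i S) ω')) (Ybar W ω, ZbarV (insert i S) ω)) =
        Pjoint p' q ω * Real.logb 2 (q i (ω.1 i) (ω.2.1 i)) +
          Pjoint p' q ω * Real.logb 2 (dist (Pjoint p' q)
            (fun ω' => (Ybar W ω', ZbarV S ω')) (Ybar W ω, ZbarV S ω)) := fun ω => by
    rcases (hP ω).eq_or_lt with h | h
    · simp [← h]
    · have hins := dist_apply_pos _ hP (fun ω' => (Ybar W ω', ZbarV (insert i S) ω')) h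
      rw [dist_Pjoint_insert p' q hq1 hiW hiS] at hins ⊢
      rw [Real.logb_mul (left_ne_zero_of_mul hins.ne') (right_ne_zero_of_mul hins.ne'), mul_add]
  simp only [entYZV, Hent_eq_neg_sum, hpt, Finset.sum_add_distrib, condEntZY]
  ring

theorem condMI_Ybar_Zbar_eq_sum (hp'0 : ∀ yv, 0 ≤ p' yv) (hq0 : ∀ m y z, 0 ≤ q m y z)
    (hq1 : ∀ m y, ∑ z, q m y z = 1) (I : Finset (Fin M')) :
    condMI (Pjoint p' q) (Ybar I) (Zbar I) (ZbarV Iᶜ) =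
      ∑ i ∈ I, (entYZV (Pjoint p' q) ∅ (insert i (outsideOrBelow I i))
        - entYZV (Pjoint p' q) ∅ (outsideOrBelow I i) - condEntZY p' q i) := by
  have hZ := sub_eq_sum_outsideOrBelow (entYZV (Pjoint p' q) ∅) I
  have hY := sub_eq_sum_outsideOrBelow (entYZV (Pjoint p' q) I) I
  rw [Finset.sum_congr rfl fun i hi => entYZV_insert_sub_of_mem p' q hp'0 hq0 hq1 hi
    (by simp [outsideOrBelow, hi])] at hY
  have e₀ : Hent (Pjoint p' q) (fun ω => (Ybar I ω, ZbarV Iᶜ ω)) =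
      entYZV (Pjoint p' q) I Iᶜ := rfl
  have e₁ : Hent (Pjoint p' q) (fun ω => (Zbar I ω, ZbarV Iᶜ ω)) =
      entYZV (Pjoint p' q) ∅ Finset.univ := by
    rw [← Finset.union_compl I]
    exact Hent_eq_entYZV _ _ _ fun ω ω' => by
      simp only [Prod.mk.injEq, Zbar_eq_iff, ZbarV_eq_iff, Finset.forall_mem_union,
        Finset.notMem_empty, IsEmpty.forall_iff, implies_true, true_and, and_assoc]
  have e₂ : Hent (Pjoint p' q) (fun ω => (Ybar I ω, Zbar I ω, ZbarV Iᶜ ω)) =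
      entYZV (Pjoint p' q) I Finset.univ := by
    rw [← Finset.union_compl I]
    exact Hent_eq_entYZV _ _ _ fun ω ω' => by
      simp only [Prod.mk.injEq, Ybar_eq_iff, Zbar_eq_iff, ZbarV_eq_iff, Finset.forall_mem_union,
        and_assoc]
  have e₃ : Hent (Pjoint p' q) (ZbarV Iᶜ) = entYZV (Pjoint p' q) ∅ Iᶜ :=
    Hent_eq_entYZV _ _ _ fun ω ω' => by simp
  simp only [condMI, e₀, e₁, e₂, e₃, Finset.sum_sub_distrib] at hZ ⊢
  linarith

theorem condMI_Y_Z_ZbarV_eq (hp'0 : ∀ yv, 0 ≤ p' yv) (hq0 : ∀ m y z, 0 ≤ q m y z)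
    (hq1 : ∀ m y, ∑ z, q m y z = 1) {i : Fin M'} {S : Finset (Fin M')} (hiS : i ∉ S) :
    condMI (Pjoint p' q) (fun ω : Samp 𝒴 𝒵 V => ω.1 i) (fun ω => ω.2.1 i) (ZbarV S) =
      entYZV (Pjoint p' q) ∅ (insert i S) - entYZV (Pjoint p' q) ∅ S - condEntZY p' q i := by
  have h := entYZV_insert_sub_of_mem p' q hp'0 hq0 hq1 (Finset.mem_singleton_self i) hiS
  have e₁ : Hent (Pjoint p' q) (fun ω => (ω.1 i, ZbarV S ω)) = entYZV (Pjoint p' q) {i} S :=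
    Hent_eq_entYZV _ _ _ fun ω ω' => by simp
  have e₂ : Hent (Pjoint p' q) (fun ω => (ω.2.1 i, ZbarV S ω)) =
      entYZV (Pjoint p' q) ∅ (insert i S) :=
    Hent_eq_entYZV _ _ _ fun ω ω' => by simp [and_assoc]
  have e₃ : Hent (Pjoint p' q) (fun ω => (ω.1 i, ω.2.1 i, ZbarV S ω)) =
      entYZV (Pjoint p' q) {i} (insert i S) :=
    Hent_eq_entYZV _ _ _ fun ω ω' => by simp [and_assoc]
  have e₄ : Hent (Pjoint p' q) (ZbarV S) = entYZV (Pjoint p' q) ∅ S :=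
    Hent_eq_entYZV _ _ _ fun ω ω' => by simp
  simp only [condMI, e₁, e₂, e₃, e₄]
  linarith

end SampleSpace

theorem statement_12_general (M' : ℕ) (𝒴 𝒵 : Fin M' → Type) [∀ i, Fintype (𝒴 i)]
    [∀ i, Fintype (𝒵 i)] (V : Type) [Fintype V]
    (p' : (∀ i, 𝒴 i) × V → ℝ) (q : ∀ m, 𝒴 m → 𝒵 m → ℝ)
    (hp'0 : ∀ yv, 0 ≤ p' yv)
    (hq0 : ∀ m y z, 0 ≤ q m y z) (hq1 : ∀ m y, ∑ z, q m y z = 1)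
    (R : Fin M' → ℝ)
    (hR : ∀ i : Fin M',
      R i = condMI (Pjoint p' q)
        (fun ω : Samp 𝒴 𝒵 V => ω.1 i)
        (fun ω : Samp 𝒴 𝒵 V => ω.2.1 i)
        (ZbarV (Finset.univ.filter fun j : Fin M' => j < i))) :
    memBstar p' q R ∧
      ∀ m : ℕ, m < M' →
        condMI (Pjoint p' q)
            (Ybar (Finset.univ.filter fun i : Fin M' => m ≤ (i : ℕ)))
            (Zbar (Finset.univ.filter fun i : Fin M' => m ≤ (i : ℕ)))
            (ZbarV (Finset.univ.filter fun i : Fin M' => (i : ℕ) < m))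
          = ∑ i ∈ Finset.univ.filter (fun i : Fin M' => m ≤ (i : ℕ)), R i := by
  have hRi (i : Fin M') : R i =
      entYZV (Pjoint p' q) ∅ (insert i (Finset.univ.filter (· < i)))
        - entYZV (Pjoint p' q) ∅ (Finset.univ.filter (· < i)) - condEntZY p' q i :=
    (hR i).trans (condMI_Y_Z_ZbarV_eq p' q hp'0 hq0 hq1 (by simp))
  refine ⟨fun I _ => ?_, fun m _ => ?_⟩
  · rw [condMI_Ybar_Zbar_eq_sum p' q hp'0 hq0 hq1]
    refine Finset.sum_le_sum fun i _ => ?_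
    have := entYZV_insert_sub_le (Pjoint_nonneg p' q hp'0 hq0) i
      (filter_lt_subset_outsideOrBelow I i)
    linarith [hRi i]
  · have hcompl : (Finset.univ.filter fun i : Fin M' => (i : ℕ) < m) =
        (Finset.univ.filter fun i : Fin M' => m ≤ (i : ℕ))ᶜ := by
      ext; simp
    rw [hcompl, condMI_Ybar_Zbar_eq_sum p' q hp'0 hq0 hq1]
    refine Finset.sum_congr rfl fun i hi => ?_
    rw [hRi, outsideOrBelow_filter_le (by simpa using hi)]

/-- Lemma B.10 (le:cornQ) of the paper: the vector `R'` with
`R'_i = I(Y_i; Z_i | Z̄_{{1,…,i−1}}, V)` belongs to `B*`, and for every `m ∈ {0,…,M'−1}`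
the constraint indexed by the tail set `{m+1,…,M'}` holds with equality:
`I(Ȳ_{{m+1,…,M'}}; Z̄_{{m+1,…,M'}} | Z̄_{{1,…,m}}, V) = Σ_{i=m+1}^{M'} R'_i`. -/
theorem statement_12 (M' : ℕ) (𝒴 𝒵 : Fin M' → Type) [∀ i, Fintype (𝒴 i)]
    [∀ i, Fintype (𝒵 i)] (V : Type) [Fintype V]
    (p' : (∀ i, 𝒴 i) × V → ℝ) (q : ∀ m, 𝒴 m → 𝒵 m → ℝ)
    (hp'0 : ∀ yv, 0 ≤ p' yv) (hp'1 : ∑ yv, p' yv = 1)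
    (hq0 : ∀ m y z, 0 ≤ q m y z) (hq1 : ∀ m y, ∑ z, q m y z = 1)
    (R : Fin M' → ℝ)
    (hR : ∀ i : Fin M',
      R i = condMI (Pjoint p' q)
        (fun ω : Samp 𝒴 𝒵 V => ω.1 i)
        (fun ω : Samp 𝒴 𝒵 V => ω.2.1 i)
        (ZbarV (Finset.univ.filter fun j : Fin M' => j < i))) :
    memBstar p' q R ∧
      ∀ m : ℕ, m < M' →
        condMI (Pjoint p' q)
            (Ybar (Finset.univ.filter fun i : Fin M' => m ≤ (i : ℕ)))
            (Zbar (Finset.univ.filter fun i : Fin M' => m ≤ (i : ℕ)))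
            (ZbarV (Finset.univ.filter fun i : Fin M' => (i : ℕ) < m))
          = ∑ i ∈ Finset.univ.filter (fun i : Fin M' => m ≤ (i : ℕ)), R i :=
  statement_12_general M' 𝒴 𝒵 V p' q hp'0 hq0 hq1 R hR
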